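/- arXiv:2505.19431 — 2 statements merged into one kernel-verified Lean document; each statement's English description precedes it below -/
import Mathlib

section
/- There exists a constant c > 0, depending only on E, x_t, σ and the dimension d, such that for every integer L ≥ 1 the Monte Carlo score estimator satisfies ‖E[S_L] − s*‖ ≤ c/√L and E[‖S_L − E[S_L]‖²] ≤ c²/L, where the expectations are taken over the i.i.d. samples X₁,…,X_L ∼ N(x_t, σ²I). -/
/-!
The estimator is the ratio `S_L = a⁻¹ • b` of the empirical means `a = L⁻¹ ∑ w(Xᵢ)` and
`b = L⁻¹ ∑ w(Xᵢ) • v(Xᵢ)` of the weight `w = exp (-E)` and of the weighted score `w • v`,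
`v = -∇E`, while `s* = A⁻¹ • B` is the ratio of their expectations. Both integrands are bounded
(`0 < w ≤ exp (-Emin)`, `‖v‖ ≤ M`), so by independence the empirical means have mean square
error `O(1/L)`. As `S_L` is a convex combination of the `v(Xᵢ)`, `‖S_L‖ ≤ M`, and the identity
`a⁻¹ • b - A⁻¹ • B = A⁻¹ • ((b - B) - (a - A) • a⁻¹ • b)` turns this into
`E ‖S_L - s*‖² ≤ c² / L` with `c = 2 exp (-Emin) M / A`. The mean square error is the sum of
the variance and the squared bias, which gives both bounds.
-/

open MeasureTheory ProbabilityTheory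

/-- The isotropic Gaussian measure `N(xₜ, σ²I)` on `ℝ^d`, as the product of `d`
one-dimensional Gaussian measures. -/
noncomputable def gaussVec (d : ℕ) (xt : EuclideanSpace ℝ (Fin d)) (σ : ℝ) :
    Measure (EuclideanSpace ℝ (Fin d)) :=
  (Measure.pi fun i => gaussianReal (xt i) ((σ ^ 2).toNNReal)).map
    (MeasurableEquiv.toLp 2 (Fin d → ℝ))

open scoped RealInnerProductSpace

theorem integral_pos_of_forall_pos {α : Type*} [MeasurableSpace α] {μ : Measure α} [NeZero μ]
    {f : α → ℝ} (hf : Integrable f μ) (hpos : ∀ x, 0 < f x) : 0 < ∫ x, f x ∂μ := by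
  rw [integral_pos_iff_support_of_nonneg (fun x => (hpos x).le) hf,
    (Set.eq_univ_of_forall fun x => (hpos x).ne' : Function.support f = Set.univ)]
  simp [NeZero.ne μ]

section Normed

variable {E : Type*} [NormedAddCommGroup E]

theorem integral_norm_sq_le_of_norm_le {α : Type*} [MeasurableSpace α] {μ : Measure α}
    [IsProbabilityMeasure μ] {f : α → E} {K : ℝ} (hf : ∀ x, ‖f x‖ ≤ K) :
    ∫ x, ‖f x‖ ^ 2 ∂μ ≤ K ^ 2 :=
  calc ∫ x, ‖f x‖ ^ 2 ∂μ ≤ ∫ _, K ^ 2 ∂μ :=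
        integral_mono_of_nonneg (ae_of_all _ fun _ => by positivity) (integrable_const _)
          (ae_of_all _ fun x => pow_le_pow_left₀ (norm_nonneg _) (hf x) 2)
    _ = K ^ 2 := by simp

theorem memLp_sum_comp_eval {α ι : Type*} [MeasurableSpace α] [Fintype ι] {γ : Measure α}
    [IsProbabilityMeasure γ] {f : α → E} {p : ENNReal} (hf : MemLp f p γ) :
    MemLp (fun ω : ι → α => ∑ i, f (ω i)) p (Measure.pi fun _ => γ) :=
  memLp_finsetSum _ fun i _ => hf.comp_measurePreserving (measurePreserving_eval _ i)

variable [NormedSpace ℝ E]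

theorem Finset.norm_centerMass_le {ι : Type*} {t : Finset ι} {w : ι → ℝ} {z : ι → E} {M : ℝ}
    (hw : ∀ i ∈ t, 0 ≤ w i) (hws : 0 < ∑ i ∈ t, w i) (hz : ∀ i ∈ t, ‖z i‖ ≤ M) :
    ‖t.centerMass w z‖ ≤ M := by
  simpa using (convex_closedBall (0 : E) M).centerMass_mem hw hws (by simpa using hz)

theorem memLp_centerMass_comp {α ι : Type*} [MeasurableSpace α] [Fintype ι] [Nonempty ι]
    {w : α → ℝ} {v : α → E} {M : ℝ} {μ : Measure (ι → α)} [IsFiniteMeasure μ]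
    (hwm : Measurable w) (hw : ∀ x, 0 < w x) (hvm : StronglyMeasurable v)
    (hv : ∀ x, ‖v x‖ ≤ M) (p : ENNReal) :
    MemLp (fun X : ι → α => Finset.univ.centerMass (fun i => w (X i)) (fun i => v (X i))) p μ := by
  have hwX : ∀ i, Measurable fun X : ι → α => w (X i) := fun i =>
    hwm.comp (measurable_pi_apply i)
  refine MemLp.of_bound ?_ M (ae_of_all _ fun X => Finset.norm_centerMass_le
    (fun i _ => (hw (X i)).le) (Finset.sum_pos (fun i _ => hw (X i)) Finset.univ_nonempty)
    (fun i _ => hv (X i)))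
  exact ((Finset.measurable_fun_sum Finset.univ fun i _ => hwX i).inv.stronglyMeasurable.smul
    (Finset.stronglyMeasurable_fun_sum Finset.univ fun i _ => (hwX i).stronglyMeasurable.smul
      (hvm.comp_measurable (measurable_pi_apply i)))).aestronglyMeasurable

theorem norm_inv_smul_sub_inv_smul_sq_le {a A M : ℝ} {b B : E} (ha : a ≠ 0) (hA : 0 < A)
    (hM : ‖a⁻¹ • b‖ ≤ M) :
    ‖a⁻¹ • b - A⁻¹ • B‖ ^ 2 ≤ 2 * (‖b - B‖ ^ 2 + M ^ 2 * ‖a - A‖ ^ 2) / A ^ 2 := by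
  have hid : a⁻¹ • b - A⁻¹ • B = A⁻¹ • ((b - B) - (a - A) • a⁻¹ • b) := by
    rw [sub_smul, smul_smul, mul_inv_cancel₀ ha, one_smul, smul_sub, smul_sub, smul_sub,
      smul_smul, inv_mul_cancel₀ hA.ne', one_smul]
    abel
  have hle : ‖(b - B) - (a - A) • a⁻¹ • b‖ ≤ ‖b - B‖ + M * ‖a - A‖ := by
    grw [norm_sub_le, norm_smul, hM, mul_comm]
  rw [hid, norm_smul, Real.norm_eq_abs, abs_inv, abs_of_pos hA, mul_pow, inv_pow, inv_mul_eq_div]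
  gcongr
  grw [hle]
  nlinarith [sq_nonneg (‖b - B‖ - M * ‖a - A‖)]

end Normed

section Hilbert

variable {H Ω : Type*} [NormedAddCommGroup H] [InnerProductSpace ℝ H] [MeasurableSpace Ω]
  {μ : Measure Ω}

theorem MeasureTheory.MemLp.integrable_inner {F G : Ω → H} (hF : MemLp F 2 μ)
    (hG : MemLp G 2 μ) : Integrable (fun x => ⟪F x, G x⟫) μ :=
  (L2.integrable_inner (𝕜 := ℝ) hF.toLp hG.toLp).congr <| by
    filter_upwards [hF.coeFn_toLp, hG.coeFn_toLp] with x hFx hGx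
    rw [hFx, hGx]

variable [CompleteSpace H]

section ProbabilitySpace

variable [IsProbabilityMeasure μ]

theorem integral_norm_sub_sq_eq {F : Ω → H} (hF : MemLp F 2 μ) (c : H) :
    ∫ x, ‖F x - c‖ ^ 2 ∂μ = ∫ x, ‖F x - μ[F]‖ ^ 2 ∂μ + ‖μ[F] - c‖ ^ 2 := by
  set m := μ[F]
  have hFm : MemLp (fun x => F x - m) 2 μ := hF.sub (memLp_const m)
  have hFmi : Integrable (fun x => F x - m) μ := hFm.integrable one_le_two
  have hsq : Integrable (fun x => ‖F x - m‖ ^ 2) μ := hFm.integrable_norm_pow two_ne_zero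
  have hin : Integrable (fun x => 2 * ⟪m - c, F x - m⟫) μ :=
    (hFmi.const_inner (m - c)).const_mul 2
  have hexpand : ∀ x, ‖F x - c‖ ^ 2 = ‖F x - m‖ ^ 2 + 2 * ⟪m - c, F x - m⟫ + ‖m - c‖ ^ 2 :=
    fun x => by rw [real_inner_comm, ← norm_add_sq_real, sub_add_sub_cancel]
  have hcross : ∫ x, ⟪m - c, F x - m⟫ ∂μ = 0 := by
    rw [integral_inner hFmi, integral_sub (hF.integrable one_le_two) (integrable_const m)]
    simp [m]
  rw [integral_congr_ae (ae_of_all _ hexpand),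
    integral_add (f := fun x => ‖F x - m‖ ^ 2 + 2 * ⟪m - c, F x - m⟫) (hsq.add hin)
      (integrable_const _),
    integral_add hsq hin, integral_const_mul, hcross]
  simp

theorem integral_norm_sub_integral_sq_le {F : Ω → H} (hF : MemLp F 2 μ) (c : H) :
    ∫ x, ‖F x - μ[F]‖ ^ 2 ∂μ ≤ ∫ x, ‖F x - c‖ ^ 2 ∂μ := by
  rw [integral_norm_sub_sq_eq hF c]
  exact le_add_of_nonneg_right (sq_nonneg _)

theorem norm_integral_sub_le_sqrt_integral_norm_sub_sq {F : Ω → H} (hF : MemLp F 2 μ) (c : H) :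
    ‖μ[F] - c‖ ≤ √(∫ x, ‖F x - c‖ ^ 2 ∂μ) := by
  rw [integral_norm_sub_sq_eq hF c]
  exact Real.le_sqrt_of_sq_le
    (le_add_of_nonneg_left (integral_nonneg fun _ => sq_nonneg _))

end ProbabilitySpace

variable {α ι : Type*} [MeasurableSpace α] [Fintype ι] {γ : Measure α} [IsProbabilityMeasure γ]

theorem integral_norm_sum_comp_eval_sq {f : α → H} (hf : MemLp f 2 γ) (h0 : ∫ x, f x ∂γ = 0) :
    ∫ ω, ‖∑ i, f (ω i)‖ ^ 2 ∂Measure.pi (fun _ : ι => γ)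
      = Fintype.card ι * ∫ x, ‖f x‖ ^ 2 ∂γ := by
  have hfi : ∀ i, MemLp (fun ω : ι → α => f (ω i)) 2 (Measure.pi fun _ => γ) := fun i =>
    hf.comp_measurePreserving (measurePreserving_eval _ i)
  have hcross : ∀ i j, i ≠ j → ∫ ω, ⟪f (ω i), f (ω j)⟫ ∂Measure.pi (fun _ : ι => γ) = 0 := by
    intro i j hij
    have hindep := (iIndepFun_pi (μ := fun _ : ι => γ) (X := fun _ => id)
      fun _ => aemeasurable_id).indepFun hij
    have hfint : ∀ k, Integrable f ((Measure.pi fun _ : ι => γ).map (fun ω => id (ω k))) :=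
      fun k => by
        rw [show (fun ω : ι → α => id (ω k)) = Function.eval k from rfl,
          (measurePreserving_eval _ k).map_eq]
        exact hf.integrable one_le_two
    refine (hindep.integral_bilin_comp_comp (measurable_pi_apply i).aemeasurable
      (measurable_pi_apply j).aemeasurable (hfint i) (hfint j) (innerSL ℝ)).trans ?_
    simp only [id]
    rw [integral_comp_eval (μ := fun _ : ι => γ) hf.aestronglyMeasurable, h0]
    simp
  have hexpand : ∀ ω : ι → α, ‖∑ i, f (ω i)‖ ^ 2 = ∑ i, ∑ j, ⟪f (ω i), f (ω j)⟫ := fun ω => by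
    simp_rw [← real_inner_self_eq_norm_sq, sum_inner, inner_sum]
  simp_rw [hexpand]
  rw [integral_finsetSum _ fun i _ =>
    integrable_finsetSum _ fun j _ => (hfi i).integrable_inner (hfi j)]
  simp_rw [integral_finsetSum _ fun j _ => (hfi _).integrable_inner (hfi j)]
  rw [Finset.sum_congr rfl fun i _ =>
    Finset.sum_eq_single i (fun j _ hji => hcross i j (Ne.symm hji)) (by simp)]
  simp_rw [real_inner_self_eq_norm_sq]
  rw [Finset.sum_congr rfl fun i _ => integral_comp_eval (μ := fun _ : ι => γ) (i := i)
    (f := fun x => ‖f x‖ ^ 2) (hf.aestronglyMeasurable.norm.pow 2)]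
  simp

variable [Nonempty ι]

theorem integral_norm_empiricalMean_sub_sq_le {f : α → H} (hf : MemLp f 2 γ) :
    ∫ ω, ‖(Fintype.card ι : ℝ)⁻¹ • ∑ i, f (ω i) - ∫ x, f x ∂γ‖ ^ 2 ∂Measure.pi (fun _ : ι => γ)
      ≤ (∫ x, ‖f x‖ ^ 2 ∂γ) / Fintype.card ι := by
  set m := ∫ x, f x ∂γ
  set n : ℝ := (Fintype.card ι : ℝ)
  have hn : 0 < n := by simp [n, Fintype.card_pos]
  have hfm : MemLp (fun x => f x - m) 2 γ := hf.sub (memLp_const m)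
  have hmean : ∀ ω : ι → α, n⁻¹ • ∑ i, f (ω i) - m = n⁻¹ • ∑ i, (f (ω i) - m) := fun ω => by
    rw [Finset.sum_sub_distrib, smul_sub, Finset.sum_const, Finset.card_univ,
      ← Nat.cast_smul_eq_nsmul ℝ, smul_smul, inv_mul_cancel₀ hn.ne', one_smul]
  have hvar : ∫ x, ‖f x - m‖ ^ 2 ∂γ ≤ ∫ x, ‖f x‖ ^ 2 ∂γ := by
    simpa using integral_norm_sub_integral_sq_le hf 0
  simp_rw [hmean, norm_smul, mul_pow, Real.norm_eq_abs, abs_inv, abs_of_pos hn]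
  rw [integral_const_mul, integral_norm_sum_comp_eval_sq hfm
    (by simp [integral_sub (hf.integrable one_le_two) (integrable_const m), m]), div_eq_inv_mul]
  calc n⁻¹ ^ 2 * (n * ∫ x, ‖f x - m‖ ^ 2 ∂γ) = n⁻¹ * ∫ x, ‖f x - m‖ ^ 2 ∂γ := by field_simp
    _ ≤ n⁻¹ * ∫ x, ‖f x‖ ^ 2 ∂γ := by gcongr

theorem integral_norm_centerMass_sub_sq_le {w : α → ℝ} {v : α → H} {C M : ℝ}
    (hwm : Measurable w) (hw : ∀ x, 0 < w x) (hwC : ∀ x, w x ≤ C)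
    (hvm : StronglyMeasurable v) (hv : ∀ x, ‖v x‖ ≤ M) :
    ∫ X, ‖Finset.univ.centerMass (fun i => w (X i)) (fun i => v (X i))
        - (∫ x, w x ∂γ)⁻¹ • ∫ x, w x • v x ∂γ‖ ^ 2 ∂Measure.pi (fun _ : ι => γ)
      ≤ (2 * C * M / ∫ x, w x ∂γ) ^ 2 / Fintype.card ι := by
  set n : ℝ := (Fintype.card ι : ℝ)
  have hn : 0 < n := by simp [n, Fintype.card_pos]
  set A := ∫ x, w x ∂γ
  set B := ∫ x, w x • v x ∂γ
  have hwb : ∀ x, ‖w x‖ ≤ C := fun x => by rw [Real.norm_of_nonneg (hw x).le]; exact hwC x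
  have hwvb : ∀ x, ‖w x • v x‖ ≤ C * M := fun x => by
    rw [norm_smul]
    exact mul_le_mul (hwb x) (hv x) (norm_nonneg _) ((norm_nonneg _).trans (hwb x))
  have hwL2 : MemLp w 2 γ := .of_bound hwm.aestronglyMeasurable C (ae_of_all _ hwb)
  have hwvL2 : MemLp (fun x => w x • v x) 2 γ :=
    .of_bound (hwm.stronglyMeasurable.smul hvm).aestronglyMeasurable (C * M) (ae_of_all _ hwvb)
  have hA : 0 < A := integral_pos_of_forall_pos (hwL2.integrable one_le_two) hw
  have hpoint : ∀ X : ι → α,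
      ‖Finset.univ.centerMass (fun i => w (X i)) (fun i => v (X i)) - A⁻¹ • B‖ ^ 2
        ≤ 2 * (‖n⁻¹ • ∑ i, w (X i) • v (X i) - B‖ ^ 2
          + M ^ 2 * ‖n⁻¹ • ∑ i, w (X i) - A‖ ^ 2) / A ^ 2 := by
    intro X
    have hsum : 0 < ∑ i, w (X i) := Finset.sum_pos (fun i _ => hw (X i)) Finset.univ_nonempty
    have hrescale : Finset.univ.centerMass (fun i => w (X i)) (fun i => v (X i))
        = (n⁻¹ • ∑ i, w (X i))⁻¹ • n⁻¹ • ∑ i, w (X i) • v (X i) := by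
      rw [smul_eq_mul, mul_inv, inv_inv, smul_smul, mul_assoc, mul_left_comm,
        mul_inv_cancel₀ hn.ne', mul_one]
      rfl
    rw [hrescale]
    refine norm_inv_smul_sub_inv_smul_sq_le (by positivity) hA ?_
    rw [← hrescale]
    exact Finset.norm_centerMass_le (fun i _ => (hw (X i)).le) hsum (fun i _ => hv (X i))
  have hintB : Integrable (fun X : ι → α => ‖n⁻¹ • ∑ i, w (X i) • v (X i) - B‖ ^ 2)
      (Measure.pi fun _ => γ) :=
    (((memLp_sum_comp_eval hwvL2).const_smul n⁻¹).sub (memLp_const B)).integrable_norm_pow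
      two_ne_zero
  have hintA : Integrable (fun X : ι → α => ‖n⁻¹ • ∑ i, w (X i) - A‖ ^ 2)
      (Measure.pi fun _ => γ) :=
    (((memLp_sum_comp_eval hwL2).const_smul n⁻¹).sub (memLp_const A)).integrable_norm_pow
      two_ne_zero
  calc _ ≤ ∫ X, 2 * (‖n⁻¹ • ∑ i, w (X i) • v (X i) - B‖ ^ 2
          + M ^ 2 * ‖n⁻¹ • ∑ i, w (X i) - A‖ ^ 2) / A ^ 2 ∂Measure.pi (fun _ : ι => γ) :=
        integral_mono_of_nonneg (ae_of_all _ fun _ => sq_nonneg _)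
          (((hintB.add (hintA.const_mul _)).const_mul 2).div_const _) (ae_of_all _ hpoint)
    _ = 2 * (∫ X, ‖n⁻¹ • ∑ i, w (X i) • v (X i) - B‖ ^ 2 ∂Measure.pi (fun _ : ι => γ)
          + M ^ 2 * ∫ X, ‖n⁻¹ • ∑ i, w (X i) - A‖ ^ 2 ∂Measure.pi (fun _ : ι => γ)) / A ^ 2 := by
        rw [integral_div, integral_const_mul, integral_add hintB (hintA.const_mul _),
          integral_const_mul]
    _ ≤ 2 * ((C * M) ^ 2 / n + M ^ 2 * (C ^ 2 / n)) / A ^ 2 := by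
        gcongr
        · exact (integral_norm_empiricalMean_sub_sq_le hwvL2).trans
            (div_le_div_of_nonneg_right (integral_norm_sq_le_of_norm_le hwvb) hn.le)
        · exact (integral_norm_empiricalMean_sub_sq_le hwL2).trans
            (div_le_div_of_nonneg_right (integral_norm_sq_le_of_norm_le hwb) hn.le)
    _ = (2 * C * M / A) ^ 2 / n := by
        field_simp
        ring

end Hilbert

theorem stmt_0_general (d : ℕ)
    (E : EuclideanSpace ℝ (Fin d) → ℝ) (Emin ME : ℝ)
    (hE : Differentiable ℝ E)
    (hEmin : ∀ x, Emin ≤ E x)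
    (hME : ∀ x, ‖gradient E x‖ ≤ ME)
    (xt : EuclideanSpace ℝ (Fin d)) (σ : ℝ) :
    ∃ c : ℝ, 0 < c ∧ ∀ L : ℕ, 1 ≤ L →
      (let γ : Measure (EuclideanSpace ℝ (Fin d)) := gaussVec d xt σ
       let μL : Measure (Fin L → EuclideanSpace ℝ (Fin d)) := Measure.pi fun _ => γ
       let SL : (Fin L → EuclideanSpace ℝ (Fin d)) → EuclideanSpace ℝ (Fin d) :=
         fun X => (∑ i, Real.exp (-(E (X i))))⁻¹ •
           ∑ i, Real.exp (-(E (X i))) • (-(gradient E (X i)))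
       let sstar : EuclideanSpace ℝ (Fin d) :=
         (∫ x, Real.exp (-(E x)) ∂γ)⁻¹ • ∫ x, Real.exp (-(E x)) • (-(gradient E x)) ∂γ
       ‖(∫ X, SL X ∂μL) - sstar‖ ≤ c / Real.sqrt L ∧
       (∫ X, ‖SL X - ∫ Y, SL Y ∂μL‖ ^ 2 ∂μL) ≤ c ^ 2 / L) := by
  have : IsProbabilityMeasure (gaussVec d xt σ) :=
    Measure.isProbabilityMeasure_map (MeasurableEquiv.measurable _).aemeasurable
  have hwm : Measurable fun x => Real.exp (-E x) := hE.continuous.measurable.neg.exp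
  have hw : ∀ x, 0 < Real.exp (-E x) := fun x => Real.exp_pos _
  have hwC : ∀ x, Real.exp (-E x) ≤ Real.exp (-Emin) := fun x =>
    Real.exp_le_exp.mpr (neg_le_neg (hEmin x))
  have hvm : StronglyMeasurable fun x => -gradient E x :=
    ((InnerProductSpace.toDual ℝ _).symm.continuous.measurable.comp
      (measurable_fderiv ℝ E)).neg.stronglyMeasurable
  have hv : ∀ x, ‖-gradient E x‖ ≤ max ME 1 := fun x =>
    (norm_neg _).trans_le ((hME x).trans (le_max_left _ _))
  have hA : 0 < ∫ x, Real.exp (-E x) ∂gaussVec d xt σ :=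
    integral_exp_pos ((integrable_const (Real.exp (-Emin))).mono' hwm.aestronglyMeasurable
      (ae_of_all _ fun x => by rw [Real.norm_of_nonneg (hw x).le]; exact hwC x))
  set c := 2 * Real.exp (-Emin) * max ME 1 / ∫ x, Real.exp (-E x) ∂gaussVec d xt σ
  have hc : 0 < c := by positivity
  refine ⟨c, hc, fun L hL => ?_⟩
  have : Nonempty (Fin L) := ⟨⟨0, hL⟩⟩
  intro γ μL SL sstar
  have hmse : ∫ X, ‖SL X - sstar‖ ^ 2 ∂μL ≤ c ^ 2 / L := by
    have h := integral_norm_centerMass_sub_sq_le (ι := Fin L) (γ := γ) hwm hw hwC hvm hv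
    rwa [Fintype.card_fin] at h
  have hSL : MemLp SL 2 μL := memLp_centerMass_comp hwm hw hvm hv 2
  refine ⟨(norm_integral_sub_le_sqrt_integral_norm_sub_sq hSL sstar).trans ?_,
    (integral_norm_sub_integral_sq_le hSL sstar).trans hmse⟩
  calc √(∫ X, ‖SL X - sstar‖ ^ 2 ∂μL) ≤ √(c ^ 2 / L) := Real.sqrt_le_sqrt hmse
    _ = c / √L := by rw [Real.sqrt_div (sq_nonneg c), Real.sqrt_sq hc.le]

/-- Bias and variance bounds for the Monte Carlo score estimator. -/
theorem stmt_0 (d : ℕ) (hd : 1 ≤ d)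
    (E : EuclideanSpace ℝ (Fin d) → ℝ) (Emin ME : ℝ) (K : NNReal)
    (hE : Differentiable ℝ E)
    (hEmin : ∀ x, Emin ≤ E x)
    (hLip : LipschitzWith K (fun x => gradient E x))
    (hME : ∀ x, ‖gradient E x‖ ≤ ME)
    (xt : EuclideanSpace ℝ (Fin d)) (σ : ℝ) (hσ : 0 < σ) :
    ∃ c : ℝ, 0 < c ∧ ∀ L : ℕ, 1 ≤ L →
      (let γ : Measure (EuclideanSpace ℝ (Fin d)) := gaussVec d xt σ
       let μL : Measure (Fin L → EuclideanSpace ℝ (Fin d)) := Measure.pi fun _ => γ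
       let SL : (Fin L → EuclideanSpace ℝ (Fin d)) → EuclideanSpace ℝ (Fin d) :=
         fun X => (∑ i, Real.exp (-(E (X i))))⁻¹ •
           ∑ i, Real.exp (-(E (X i))) • (-(gradient E (X i)))
       let sstar : EuclideanSpace ℝ (Fin d) :=
         (∫ x, Real.exp (-(E x)) ∂γ)⁻¹ • ∫ x, Real.exp (-(E x)) • (-(gradient E x)) ∂γ
       ‖(∫ X, SL X ∂μL) - sstar‖ ≤ c / Real.sqrt L ∧
       (∫ X, ‖SL X - ∫ Y, SL Y ∂μL‖ ^ 2 ∂μL) ≤ c ^ 2 / L) :=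
  stmt_0_general d E Emin ME hE hEmin hME xt σ
end

section
/- Suppose that for p-almost every x ∈ X: ‖a(x) − b(x)‖ ≤ C₂, ∫_Ω ‖S(x,ω) − b(x)‖ dP(ω) ≤ c(x)/√L, and ∫_Ω ‖S(x,ω) − b(x)‖² dP(ω) ≤ c(x)²/L, where C₂ ≥ 0 and L ≥ 1 are constants and c : X → [0,∞) has c and c² integrable with respect to p. Assume moreover that (x,ω) ↦ ‖a(x) − S(x,ω)‖² is integrable with respect to p ⊗ P and x ↦ ‖a(x) − b(x)‖² is integrable with respect to p. Then | ∫_X ∫_Ω ‖a(x) − S(x,ω)‖² dP(ω) dp(x) − ∫_X ‖a(x) − b(x)‖² dp(x) | ≤ (∫_X c(x)² dp(x))/L + 2C₂ (∫_X c(x) dp(x))/√L. -/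
open MeasureTheory

/-!
Write `a - S = (a - b) + (b - S)`. Expanding the square, the pointwise discrepancy
`|‖a - S‖² - ‖a - b‖²|` is at most `2 ‖a - b‖ ‖S - b‖ + ‖S - b‖²` by Cauchy–Schwarz.
Integrating over `ω` and using the moment bounds gives `2 C₂ c(x) / √L + c(x)² / L` for
almost every `x`; integrating over `x` gives the claim.
-/

lemma abs_norm_add_sq_sub_norm_sq_le {E : Type*} [NormedAddCommGroup E] [InnerProductSpace ℝ E]
    (x y : E) : |‖x + y‖ ^ 2 - ‖x‖ ^ 2| ≤ 2 * ‖x‖ * ‖y‖ + ‖y‖ ^ 2 := by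
  have hinner := abs_le.mp (abs_real_inner_le_norm x y)
  rw [norm_add_sq_real, abs_le]
  constructor <;> nlinarith [sq_nonneg ‖y‖]

lemma abs_integral_norm_sub_sq_sub_norm_sub_sq_le {Ω E : Type*} [MeasurableSpace Ω]
    [NormedAddCommGroup E] [InnerProductSpace ℝ E] {P : Measure Ω} [IsProbabilityMeasure P]
    {f : Ω → E} (hf : AEStronglyMeasurable f P) (u v : E)
    (hint : Integrable (fun ω => ‖u - f ω‖ ^ 2) P) :
    |(∫ ω, ‖u - f ω‖ ^ 2 ∂P) - ‖u - v‖ ^ 2| ≤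
      2 * ‖u - v‖ * (∫ ω, ‖f ω - v‖ ∂P) + ∫ ω, ‖f ω - v‖ ^ 2 ∂P := by
  have hL2 : MemLp (fun ω => f ω - v) 2 P := by
    have hu : MemLp (fun ω => u - f ω) 2 P :=
      (memLp_two_iff_integrable_sq_norm (aestronglyMeasurable_const.sub hf)).2 hint
    simpa only [Pi.sub_def, sub_sub_sub_cancel_left] using (memLp_const (u - v)).sub hu
  have hint₁ : Integrable (fun ω => ‖f ω - v‖) P := (hL2.integrable one_le_two).norm
  have hint₂ : Integrable (fun ω => ‖f ω - v‖ ^ 2) P := hL2.integrable_norm_pow two_ne_zero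
  calc |(∫ ω, ‖u - f ω‖ ^ 2 ∂P) - ‖u - v‖ ^ 2|
      = ‖∫ ω, (‖u - f ω‖ ^ 2 - ‖u - v‖ ^ 2) ∂P‖ := by
        rw [integral_sub hint (integrable_const _), integral_const, probReal_univ, one_smul,
          Real.norm_eq_abs]
    _ ≤ ∫ ω, (2 * ‖u - v‖ * ‖f ω - v‖ + ‖f ω - v‖ ^ 2) ∂P := by
        refine norm_integral_le_of_norm_le ((hint₁.const_mul _).add hint₂) (ae_of_all _ ?_)
        intro ω
        simpa only [sub_add_sub_cancel, norm_sub_rev v, Real.norm_eq_abs] using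
          abs_norm_add_sq_sub_norm_sq_le (u - v) (v - f ω)
    _ = 2 * ‖u - v‖ * (∫ ω, ‖f ω - v‖ ∂P) + ∫ ω, ‖f ω - v‖ ^ 2 ∂P := by
        rw [integral_add (hint₁.const_mul _) hint₂, integral_const_mul]

theorem stmt_6_general (d : ℕ)
    {X Ω : Type*} [MeasurableSpace X] [MeasurableSpace Ω]
    (p : Measure X) (P : Measure Ω) [IsProbabilityMeasure p] [IsProbabilityMeasure P]
    (a b : X → EuclideanSpace ℝ (Fin d)) (S : X × Ω → EuclideanSpace ℝ (Fin d))
    (hS : Measurable S)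
    (C₂ : ℝ) (L : ℝ)
    (c : X → ℝ)
    (hcInt : Integrable c p) (hc2Int : Integrable (fun x => c x ^ 2) p)
    (hae : ∀ᵐ x ∂p, ‖a x - b x‖ ≤ C₂ ∧
      (∫ ω, ‖S (x, ω) - b x‖ ∂P) ≤ c x / Real.sqrt L ∧
      (∫ ω, ‖S (x, ω) - b x‖ ^ 2 ∂P) ≤ c x ^ 2 / L)
    (hInt1 : Integrable (fun q : X × Ω => ‖a q.1 - S q‖ ^ 2) (p.prod P))
    (hInt2 : Integrable (fun x => ‖a x - b x‖ ^ 2) p) :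
    |(∫ x, ∫ ω, ‖a x - S (x, ω)‖ ^ 2 ∂P ∂p) - ∫ x, ‖a x - b x‖ ^ 2 ∂p| ≤
      (∫ x, c x ^ 2 ∂p) / L + 2 * C₂ * (∫ x, c x ∂p) / Real.sqrt L := by
  have hfiber : ∀ᵐ x ∂p, ‖(∫ ω, ‖a x - S (x, ω)‖ ^ 2 ∂P) - ‖a x - b x‖ ^ 2‖ ≤
      c x ^ 2 / L + 2 * C₂ * (c x / Real.sqrt L) := by
    filter_upwards [hae, hInt1.prod_right_ae] with x ⟨hab, hmom₁, hmom₂⟩ hx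
    have hdev := abs_integral_norm_sub_sq_sub_norm_sub_sq_le (f := fun ω => S (x, ω))
      (hS.comp measurable_prodMk_left).aestronglyMeasurable (a x) (b x) hx
    have hmom₁' := mul_le_mul hab hmom₁ (integral_nonneg fun ω => norm_nonneg _)
      ((norm_nonneg _).trans hab)
    rw [Real.norm_eq_abs]
    linarith
  have hbound : Integrable (fun x => c x ^ 2 / L + 2 * C₂ * (c x / Real.sqrt L)) p :=
    (hc2Int.div_const L).add ((hcInt.div_const _).const_mul _)
  calc |(∫ x, ∫ ω, ‖a x - S (x, ω)‖ ^ 2 ∂P ∂p) - ∫ x, ‖a x - b x‖ ^ 2 ∂p|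
      = ‖∫ x, ((∫ ω, ‖a x - S (x, ω)‖ ^ 2 ∂P) - ‖a x - b x‖ ^ 2) ∂p‖ := by
        rw [integral_sub hInt1.integral_prod_left hInt2, Real.norm_eq_abs]
    _ ≤ ∫ x, (c x ^ 2 / L + 2 * C₂ * (c x / Real.sqrt L)) ∂p :=
        norm_integral_le_of_norm_le hbound hfiber
    _ = (∫ x, c x ^ 2 ∂p) / L + 2 * C₂ * (∫ x, c x ∂p) / Real.sqrt L := by
        rw [integral_add (hc2Int.div_const L) ((hcInt.div_const _).const_mul _),
          integral_const_mul, integral_div, integral_div, mul_div_assoc]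

/-- Bias bound for the score-matching loss when the true score `b` is replaced by an
estimator `S` with controlled first and second moments of the error. -/
theorem stmt_6 (d : ℕ) (hd : 1 ≤ d)
    {X Ω : Type*} [MeasurableSpace X] [MeasurableSpace Ω]
    (p : Measure X) (P : Measure Ω) [IsProbabilityMeasure p] [IsProbabilityMeasure P]
    (a b : X → EuclideanSpace ℝ (Fin d)) (S : X × Ω → EuclideanSpace ℝ (Fin d))
    (ha : Measurable a) (hb : Measurable b) (hS : Measurable S)
    (C₂ : ℝ) (hC₂ : 0 ≤ C₂) (L : ℝ) (hL : 1 ≤ L)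
    (c : X → ℝ) (hc : ∀ x, 0 ≤ c x)
    (hcInt : Integrable c p) (hc2Int : Integrable (fun x => c x ^ 2) p)
    (hae : ∀ᵐ x ∂p, ‖a x - b x‖ ≤ C₂ ∧
      (∫ ω, ‖S (x, ω) - b x‖ ∂P) ≤ c x / Real.sqrt L ∧
      (∫ ω, ‖S (x, ω) - b x‖ ^ 2 ∂P) ≤ c x ^ 2 / L)
    (hInt1 : Integrable (fun q : X × Ω => ‖a q.1 - S q‖ ^ 2) (p.prod P))
    (hInt2 : Integrable (fun x => ‖a x - b x‖ ^ 2) p) :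
    |(∫ x, ∫ ω, ‖a x - S (x, ω)‖ ^ 2 ∂P ∂p) - ∫ x, ‖a x - b x‖ ^ 2 ∂p| ≤
      (∫ x, c x ^ 2 ∂p) / L + 2 * C₂ * (∫ x, c x ∂p) / Real.sqrt L :=
  stmt_6_general d p P a b S hS C₂ L c hcInt hc2Int hae hInt1 hInt2
end
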